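/- Let M be a divisibility monoid. Any two irreducible elements x, y of M that admit local deltas satisfy either Δ_R(x) = Δ_R(y) or Δ_R(x) ∧ Δ_R(y) = 1, where ∧ denotes the left gcd. -/

import Mathlib

/-- `LDvd b a` : `b` left-divides `a`, i.e. `a = b * d` for some `d`. -/
def LDvd {M : Type*} [Monoid M] (b a : M) : Prop := ∃ d, a = b * d

/-- `c` is a right lcm of `a` and `b`. -/
def IsRightLcm {M : Type*} [Monoid M] (a b c : M) : Prop :=
  LDvd a c ∧ LDvd b c ∧ ∀ m, LDvd a m → LDvd b m → LDvd c m

/-- `1` is the only invertible element. -/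
def Conical (M : Type*) [Monoid M] : Prop := ∀ u : M, IsUnit u → u = 1

/-- Left and right cancellativity. -/
def Cancellative (M : Type*) [Monoid M] : Prop :=
  (∀ a b c : M, a * b = a * c → b = c) ∧ (∀ a b c : M, b * a = c * a → b = c)

/-- `IsRes a b r` : `r` is the residue `a \ b`, i.e. `a * r` is the right lcm `a ∨ b`. -/
def IsRes {M : Type*} [Monoid M] (a b r : M) : Prop := IsRightLcm a b (a * r)

/-- The set of irreducible elements of `M`. -/
def Irr (M : Type*) [Monoid M] : Set M :=
  {a | a ≠ 1 ∧ ∀ b c : M, a = b * c → b = 1 ∨ c = 1}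

/-- `a` is quasi-central: `aΣ = Σa` where `Σ` is the set of irreducible elements. -/
def QuasiCentral {M : Type*} [Monoid M] (a : M) : Prop :=
  (fun x => a * x) '' Irr M = (fun x => x * a) '' Irr M

/-- `g` is a left gcd of `a` and `b`. -/
def IsLeftGcd {M : Type*} [Monoid M] (a b g : M) : Prop :=
  LDvd g a ∧ LDvd g b ∧ ∀ d, LDvd d a → LDvd d b → LDvd d g

/-- `j` is the join of `x` and `y` inside the lattice `↓(a)` of left divisors of `a`. -/
def IsJoinIn {M : Type*} [Monoid M] (a x y j : M) : Prop :=
  LDvd j a ∧ LDvd x j ∧ LDvd y j ∧ ∀ m, LDvd m a → LDvd x m → LDvd y m → LDvd j m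

/-- A (left) divisibility monoid : cancellative, finitely generated by its irreducible
elements, any two elements admit a left gcd, and every `↓(a)` is a finite distributive
lattice under left divisibility (meets are left gcds, joins exist, distributivity holds). -/
structure IsDivisibilityMonoid (M : Type*) [Monoid M] : Prop where
  mul_left_cancel : ∀ a b c : M, a * b = a * c → b = c
  mul_right_cancel : ∀ a b c : M, b * a = c * a → b = c
  irr_finite : (Irr M).Finite
  irr_gen : ∀ a : M, a ∈ Submonoid.closure (Irr M)
  exists_gcd : ∀ a b : M, ∃ g, IsLeftGcd a b g
  divisors_finite : ∀ a : M, {b : M | LDvd b a}.Finite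
  exists_join : ∀ a x y : M, LDvd x a → LDvd y a → ∃ j, IsJoinIn a x y j
  distrib : ∀ a x y z : M, LDvd x a → LDvd y a → LDvd z a →
    ∀ jyz g gxy gxz j', IsJoinIn a y z jyz → IsLeftGcd x jyz g →
      IsLeftGcd x y gxy → IsLeftGcd x z gxz → IsJoinIn a gxy gxz j' → g = j'

/-- `d` is the (right) local delta of `a`: the right lcm of the set `{b \ a : b ∈ M}`,
all of whose elements are required to exist. -/
def IsLocalDelta {M : Type*} [Monoid M] (a d : M) : Prop :=
  (∀ b : M, ∃ r, IsRes b a r) ∧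
  (∀ b r : M, IsRes b a r → LDvd r d) ∧
  ∀ m : M, (∀ b r : M, IsRes b a r → LDvd r m) → LDvd d m

/-!
Residuation `x ↦ c \ x` sends irreducibles to irreducibles or `1`, and distributivity makes it
injective where it is nontrivial. Hence on a finite residue-closed set `F` of
irreducibles with lcm `D`, residuation by any `c` divisible by no element of `F` permutes `F`
and fixes `D`. A second use of distributivity shows that no single residuation step by an
irreducible leads from an irreducible outside `F` into `F`. Applied to the irreducible residues
of `z = b \ x`, this makes "being a residue of" symmetric on irreducibles with a local delta.
An irreducible dividing `Δ_R(x)` is a residue of `x`, so a common irreducible divisor `z` of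
`Δ_R(x)` and `Δ_R(y)` gives `x` and `y` the same residues as `z`, hence the same local delta;
without one, the left gcd is `1` because every `d ≠ 1` has an irreducible left divisor.
-/

section Monoid

variable {M : Type*} [Monoid M]

theorem LDvd.refl (a : M) : LDvd a a := dvd_refl a

theorem LDvd.trans {a b c : M} (h₁ : LDvd a b) (h₂ : LDvd b c) : LDvd a c := dvd_trans h₁ h₂

theorem one_ldvd (a : M) : LDvd 1 a := one_dvd a

theorem ldvd_mul_right (a b : M) : LDvd a (a * b) := dvd_mul_right a b

theorem mul_ldvd_mul_left (c : M) {a b : M} (h : LDvd a b) : LDvd (c * a) (c * b) :=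
  mul_dvd_mul_left c h

theorem IsRightLcm.symm {a b c : M} (h : IsRightLcm a b c) : IsRightLcm b a c :=
  ⟨h.2.1, h.1, fun m hb ha => h.2.2 m ha hb⟩

theorem isRightLcm_of_ldvd {a b : M} (h : LDvd a b) : IsRightLcm a b b :=
  ⟨h, .refl b, fun _ _ hb => hb⟩

theorem IsRightLcm.isJoinIn {a b j A : M} (h : IsRightLcm a b j) (hjA : LDvd j A) :
    IsJoinIn A a b j :=
  ⟨hjA, h.1, h.2.1, fun m _ ham hbm => h.2.2 m ham hbm⟩

theorem IsJoinIn.symm {A a b j : M} (h : IsJoinIn A a b j) : IsJoinIn A b a j :=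
  ⟨h.1, h.2.2.1, h.2.1, fun m hmA hb ha => h.2.2.2 m hmA ha hb⟩

theorem isJoinIn_of_ldvd {a b A : M} (hab : LDvd a b) (hbA : LDvd b A) : IsJoinIn A a b b :=
  (isRightLcm_of_ldvd hab).isJoinIn hbA

theorem IsLeftGcd.symm {a b g : M} (h : IsLeftGcd a b g) : IsLeftGcd b a g :=
  ⟨h.2.1, h.1, fun d hb ha => h.2.2 d ha hb⟩

theorem isLeftGcd_of_ldvd {a b : M} (h : LDvd a b) : IsLeftGcd a b a :=
  ⟨.refl a, h, fun _ ha _ => ha⟩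

theorem eq_one_or_eq_of_ldvd_irr {z d : M} (hz : z ∈ Irr M) (h : LDvd d z) : d = 1 ∨ d = z := by
  obtain ⟨e, he⟩ := h
  refine (hz.2 d e he).imp_right fun he₁ => ?_
  rw [he, he₁, mul_one]

theorem isLeftGcd_one_of_irr {a d : M} (ha : a ∈ Irr M) (had : ¬ LDvd a d) :
    IsLeftGcd d a 1 := by
  refine ⟨one_ldvd d, one_ldvd a, fun e hed hea => ?_⟩
  rcases eq_one_or_eq_of_ldvd_irr ha hea with rfl | rfl
  · exact .refl 1
  · exact absurd hed had

theorem isRes_one_left (a : M) : IsRes 1 a a := by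
  unfold IsRes
  rw [one_mul]
  exact ⟨one_ldvd a, .refl a, fun _ _ ha => ha⟩

theorem isRes_one_of_ldvd {a c : M} (h : LDvd a c) : IsRes c a 1 := by
  unfold IsRes
  rw [mul_one]
  exact (isRightLcm_of_ldvd h).symm

theorem isRes_one_right (c : M) : IsRes c 1 1 := isRes_one_of_ldvd (one_ldvd c)

theorem isRes_self (a : M) : IsRes a a 1 := isRes_one_of_ldvd (.refl a)

theorem ldvd_of_isRes_one {a c : M} (h : IsRes c a 1) : LDvd a c := mul_one c ▸ h.2.1

def HasResidues (a : M) : Prop := ∀ c, ∃ r, IsRes c a r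

def IsResidue (a r : M) : Prop := ∃ c, IsRes c a r

theorem IsResidue.refl (a : M) : IsResidue a a := ⟨1, isRes_one_left a⟩

/-- The residue `c \ a`; junk when it does not exist. -/
noncomputable def res (c a : M) : M := Classical.epsilon (IsRes c a)

theorem isRes_res {c a : M} (h : ∃ r, IsRes c a r) : IsRes c a (res c a) :=
  Classical.epsilon_spec h

theorem IsLocalDelta.ldvd {x y dx dy : M} (hdx : IsLocalDelta x dx) (hdy : IsLocalDelta y dy)
    (h : ∀ r, IsResidue x r → IsResidue y r) : LDvd dx dy :=
  hdx.2.2 dy fun b r hbr =>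
    let ⟨c, hc⟩ := h r ⟨b, hbr⟩
    hdy.2.1 c r hc

def FinLcm (s : Finset M) (D : M) : Prop :=
  (∀ r ∈ s, LDvd r D) ∧ ∀ m, (∀ r ∈ s, LDvd r m) → LDvd D m

theorem finLcm_empty : FinLcm (∅ : Finset M) 1 := ⟨by simp, fun m _ => one_ldvd m⟩

theorem finLcm_insert [DecidableEq M] {s : Finset M} {a D₀ D : M} (hs : FinLcm s D₀)
    (h : IsRightLcm a D₀ D) : FinLcm (insert a s) D := by
  refine ⟨fun r hr => ?_, fun m hm => h.2.2 m (hm a (Finset.mem_insert_self a s))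
    (hs.2 m fun r hr => hm r (Finset.mem_insert_of_mem hr))⟩
  rcases Finset.mem_insert.mp hr with rfl | hr
  · exact h.1
  · exact (hs.1 r hr).trans h.2.1

theorem FinLcm.isRightLcm_insert [DecidableEq M] {s : Finset M} {a D₀ D : M}
    (h : FinLcm (insert a s) D) (hs : FinLcm s D₀) (hD₀ : LDvd D₀ D) :
    IsRightLcm a D₀ D := by
  refine ⟨h.1 a (Finset.mem_insert_self a s), hD₀, fun m ham hD₀m => h.2 m fun r hr => ?_⟩
  rcases Finset.mem_insert.mp hr with rfl | hr
  · exact ham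
  · exact (hs.1 r hr).trans hD₀m

structure IsResidueClosed (F : Finset M) : Prop where
  irr : ∀ s ∈ F, s ∈ Irr M
  hasResidues : ∀ s ∈ F, HasResidues s
  closed : ∀ s ∈ F, ∀ c r, IsRes c s r → r = 1 ∨ r ∈ F

namespace IsResidueClosed

variable {F : Finset M} (hF : IsResidueClosed F)
include hF

theorem isRes_res {s : M} (hs : s ∈ F) (c : M) : IsRes c s (res c s) :=
  _root_.isRes_res (hF.hasResidues s hs c)

theorem res_mem {s c : M} (hs : s ∈ F) (hsc : ¬ LDvd s c) : res c s ∈ F :=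
  (hF.closed s hs c _ (hF.isRes_res hs c)).resolve_left fun h₁ =>
    hsc (ldvd_of_isRes_one (h₁ ▸ hF.isRes_res hs c))

theorem ldvd_of_isRes {D c s r : M} (hD : FinLcm F D) (hs : s ∈ F) (h : IsRes c s r) :
    LDvd r D := by
  rcases hF.closed s hs c r h with rfl | hr
  · exact one_ldvd D
  · exact hD.1 r hr

end IsResidueClosed

end Monoid

namespace IsDivisibilityMonoid

variable {M : Type*} [Monoid M] (hM : IsDivisibilityMonoid M)
include hM

theorem ldvd_of_mul_ldvd_mul_left {a b c : M} (h : LDvd (c * a) (c * b)) : LDvd a b := by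
  obtain ⟨e, he⟩ := h
  exact ⟨e, hM.mul_left_cancel c _ _ (by rw [he, mul_assoc])⟩

/-- Both `u` and `1` are joins of `1` with itself in `↓1`, and distributivity identifies them. -/
theorem eq_one_of_mul_eq_one {u v : M} (h : u * v = 1) : u = 1 := by
  have hu : LDvd u 1 := ⟨v, h.symm⟩
  have hjoin : IsJoinIn (1 : M) 1 1 u :=
    ⟨hu, one_ldvd u, one_ldvd u, fun m _ _ _ => ⟨v * m, by rw [← mul_assoc, h, one_mul]⟩⟩
  exact hM.distrib 1 1 1 1 (.refl 1) (.refl 1) (.refl 1) u u 1 1 1 hjoin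
    (isLeftGcd_of_ldvd hu).symm (isLeftGcd_of_ldvd (.refl 1)) (isLeftGcd_of_ldvd (.refl 1))
    (isJoinIn_of_ldvd (.refl 1) (.refl 1))

theorem ldvd_antisymm {a b : M} (h₁ : LDvd a b) (h₂ : LDvd b a) : a = b := by
  obtain ⟨d, rfl⟩ := h₁
  obtain ⟨e, he⟩ := h₂
  have hde : d * e = 1 := hM.mul_left_cancel a _ _ (by rw [← mul_assoc, ← he, mul_one])
  rw [hM.eq_one_of_mul_eq_one hde, mul_one]

theorem eq_one_of_ldvd_one {a : M} (h : LDvd a 1) : a = 1 := hM.ldvd_antisymm h (one_ldvd a)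

theorem isRightLcm_unique {a b c c' : M} (h : IsRightLcm a b c) (h' : IsRightLcm a b c') :
    c = c' :=
  hM.ldvd_antisymm (h.2.2 c' h'.1 h'.2.1) (h'.2.2 c h.1 h.2.1)

theorem isRes_unique {a c r r' : M} (h : IsRes c a r) (h' : IsRes c a r') : r = r' :=
  hM.mul_left_cancel c _ _ (hM.isRightLcm_unique h h')

theorem finLcm_unique {s : Finset M} {D D' : M} (h : FinLcm s D) (h' : FinLcm s D') : D = D' :=
  hM.ldvd_antisymm (h.2 D' h'.1) (h'.2 D h.1)

theorem eq_join_of_ldvd_lcm {x y z j g₁ g₂ j' : M} (hj : IsRightLcm y z j) (hx : LDvd x j)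
    (h₁ : IsLeftGcd x y g₁) (h₂ : IsLeftGcd x z g₂) (hj' : IsJoinIn j g₁ g₂ j') :
    x = j' :=
  hM.distrib j x y z hx hj.1 hj.2.1 j x g₁ g₂ j' (hj.isJoinIn (.refl j)) (isLeftGcd_of_ldvd hx)
    h₁ h₂ hj'

theorem exists_isRightLcm {a b A : M} (ha : LDvd a A) (hb : LDvd b A) :
    ∃ j, IsRightLcm a b j ∧ LDvd j A := by
  obtain ⟨j, hjA, haj, hbj, hmin⟩ := hM.exists_join A a b ha hb
  refine ⟨j, ⟨haj, hbj, fun m ham hbm => ?_⟩, hjA⟩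
  obtain ⟨g, hgj, hgm, hgmax⟩ := hM.exists_gcd j m
  exact (hmin g (hgj.trans hjA) (hgmax a haj ham) (hgmax b hbj hbm)).trans hgm

theorem isRes_mul {a b c r s : M} (h₁ : IsRes b a r) (h₂ : IsRes c r s) :
    IsRes (b * c) a s := by
  refine ⟨ldvd_mul_right _ _, ?_, fun m hbcm ham => ?_⟩
  · rw [mul_assoc]
    exact h₁.2.1.trans (mul_ldvd_mul_left b h₂.2.1)
  · obtain ⟨e, rfl⟩ := hbcm
    simp only [mul_assoc] at ham ⊢
    have hre : LDvd r (c * e) :=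
      hM.ldvd_of_mul_ldvd_mul_left (h₁.2.2 _ (ldvd_mul_right b _) ham)
    exact mul_ldvd_mul_left b (h₂.2.2 _ (ldvd_mul_right c e) hre)

theorem isRes_of_isRes_mul {a b c r t : M} (h₁ : IsRes b a r) (h₂ : IsRes (b * c) a t) :
    IsRes c r t := by
  refine ⟨ldvd_mul_right _ _, ?_, fun m hcm hrm => ?_⟩
  · apply hM.ldvd_of_mul_ldvd_mul_left (c := b)
    rw [← mul_assoc]
    exact h₁.2.2 _ ⟨c * t, mul_assoc b c t⟩ h₂.2.1
  · apply hM.ldvd_of_mul_ldvd_mul_left (c := b)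
    rw [← mul_assoc]
    exact h₂.2.2 _ (mul_ldvd_mul_left b hcm) (h₁.2.1.trans (mul_ldvd_mul_left b hrm))

theorem hasResidues_of_isRes {a b r : M} (ha : HasResidues a) (h : IsRes b a r) :
    HasResidues r := fun c =>
  (ha (b * c)).imp fun _ ht => hM.isRes_of_isRes_mul h ht

theorem isResidue_trans {a r s : M} (h₁ : IsResidue a r) (h₂ : IsResidue r s) :
    IsResidue a s :=
  let ⟨b, hb⟩ := h₁
  let ⟨c, hc⟩ := h₂
  ⟨b * c, hM.isRes_mul hb hc⟩

theorem isRes_lcm {a b c r s j w : M} (hr : IsRes c a r) (hs : IsRes c b s)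
    (hj : IsRightLcm a b j) (hw : IsRightLcm r s w) : IsRes c j w := by
  refine ⟨ldvd_mul_right _ _, hj.2.2 _ (hr.2.1.trans (mul_ldvd_mul_left c hw.1))
    (hs.2.1.trans (mul_ldvd_mul_left c hw.2.1)), fun m hcm hjm => ?_⟩
  obtain ⟨e, rfl⟩ := hcm
  have hre : LDvd r e :=
    hM.ldvd_of_mul_ldvd_mul_left (hr.2.2 _ (ldvd_mul_right c e) (hj.1.trans hjm))
  have hse : LDvd s e :=
    hM.ldvd_of_mul_ldvd_mul_left (hs.2.2 _ (ldvd_mul_right c e) (hj.2.1.trans hjm))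
  exact mul_ldvd_mul_left c (hw.2.2 e hre hse)

theorem ldvd_or_ldvd_of_ldvd_lcm {z a b j : M} (hz : z ∈ Irr M) (hj : IsRightLcm a b j)
    (h : LDvd z j) : LDvd z a ∨ LDvd z b := by
  by_contra! hzab
  exact hz.1 (hM.eq_join_of_ldvd_lcm hj h (isLeftGcd_one_of_irr hz hzab.1).symm
    (isLeftGcd_one_of_irr hz hzab.2).symm (isJoinIn_of_ldvd (.refl 1) (one_ldvd j)))

/-- If `b \ x = r₁ r₂`, the divisor `b r₁` of `b ∨ x` is the join of `b` and
`b r₁ ∧ x ∈ {1, x}`. -/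
theorem eq_one_or_mem_irr_of_isRes {x b r : M} (hx : x ∈ Irr M) (h : IsRes b x r) :
    r = 1 ∨ r ∈ Irr M := by
  refine or_iff_not_imp_left.2 fun hr => ⟨hr, fun r₁ r₂ hr₁₂ => ?_⟩
  subst hr₁₂
  have hm : LDvd (b * r₁) (b * (r₁ * r₂)) := mul_ldvd_mul_left b (ldvd_mul_right r₁ r₂)
  have hgb : IsLeftGcd (b * r₁) b b := (isLeftGcd_of_ldvd (ldvd_mul_right b r₁)).symm
  obtain ⟨g, hg⟩ := hM.exists_gcd (b * r₁) x
  rcases eq_one_or_eq_of_ldvd_irr hx hg.2.1 with rfl | rfl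
  · have hbr₁ : b * r₁ = b := hM.eq_join_of_ldvd_lcm h hm hgb hg
      (isJoinIn_of_ldvd (one_ldvd b) (ldvd_mul_right b _)).symm
    exact Or.inl (hM.mul_left_cancel b _ _ (hbr₁.trans (mul_one b).symm))
  · have hbr₁ : b * r₁ = b * (r₁ * r₂) :=
      hM.eq_join_of_ldvd_lcm h hm hgb hg (h.isJoinIn (.refl _))
    rw [← mul_assoc] at hbr₁
    exact Or.inr (hM.mul_left_cancel (b * r₁) _ _ (hbr₁.symm.trans (mul_one _).symm))

/-- `P = a ∨ a'` is coprime to `c`, so distributivity in `↓(c ∨ a)` gives `P = a`. -/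
theorem eq_of_isRes_eq {a a' c t : M} (ha : a ∈ Irr M) (ha' : a' ∈ Irr M) (h : IsRes c a t)
    (h' : IsRes c a' t) (ht : t ≠ 1) : a = a' := by
  have hac : ¬ LDvd a c := fun hac => ht (hM.isRes_unique h (isRes_one_of_ldvd hac))
  have ha'c : ¬ LDvd a' c := fun ha'c => ht (hM.isRes_unique h' (isRes_one_of_ldvd ha'c))
  obtain ⟨P, hP, hPct⟩ := hM.exists_isRightLcm h.2.1 h'.2.1
  have hPc : IsLeftGcd P c 1 := by
    refine ⟨one_ldvd P, one_ldvd c, fun d hdP hdc => ?_⟩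
    obtain rfl := hM.eq_join_of_ldvd_lcm hP hdP
      (isLeftGcd_one_of_irr ha fun had => hac (had.trans hdc))
      (isLeftGcd_one_of_irr ha' fun had => ha'c (had.trans hdc))
      (isJoinIn_of_ldvd (.refl 1) (one_ldvd P))
    exact .refl 1
  have hPa : P = a := hM.eq_join_of_ldvd_lcm h hPct hPc (isLeftGcd_of_ldvd hP.1).symm
    (isJoinIn_of_ldvd (one_ldvd a) h.2.1)
  rcases eq_one_or_eq_of_ldvd_irr ha (hPa ▸ hP.2.1) with h₁ | h₁
  · exact absurd h₁ ha'.1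
  · exact h₁.symm

theorem exists_irr_ldvd {d : M} (hd : d ≠ 1) : ∃ z ∈ Irr M, LDvd z d := by
  induction hM.irr_gen d using Submonoid.closure_induction with
  | mem z hz => exact ⟨z, hz, .refl z⟩
  | one => exact absurd rfl hd
  | mul d₁ d₂ _ _ ih₁ ih₂ =>
    by_cases hd₁ : d₁ = 1
    · subst hd₁
      rw [one_mul] at hd ⊢
      exact ih₂ hd
    · obtain ⟨z, hz, hzd⟩ := ih₁ hd₁
      exact ⟨z, hz, hzd.trans (ldvd_mul_right _ _)⟩

theorem isLeftGcd_one_of_forall_irr {a b : M} (h : ∀ z ∈ Irr M, LDvd z a → ¬ LDvd z b) :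
    IsLeftGcd a b 1 := by
  refine ⟨one_ldvd a, one_ldvd b, fun d hda hdb => ?_⟩
  by_cases hd : d = 1
  · subst hd
    exact .refl 1
  · obtain ⟨z, hz, hzd⟩ := hM.exists_irr_ldvd hd
    exact absurd (hzd.trans hdb) (h z hz (hzd.trans hda))

theorem exists_finLcm [DecidableEq M] (s : Finset M) {A : M} (hs : ∀ r ∈ s, LDvd r A) :
    ∃ D, FinLcm s D ∧ LDvd D A := by
  induction s using Finset.induction_on with
  | empty => exact ⟨1, finLcm_empty, one_ldvd A⟩
  | insert a s _ ih =>
    obtain ⟨D₀, hD₀, hD₀A⟩ := ih fun r hr => hs r (Finset.mem_insert_of_mem hr)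
    obtain ⟨D, hD, hDA⟩ := hM.exists_isRightLcm (hs a (Finset.mem_insert_self a s)) hD₀A
    exact ⟨D, finLcm_insert hD₀ hD, hDA⟩

theorem exists_mem_ldvd_of_ldvd_finLcm [DecidableEq M] {s : Finset M} {z D : M}
    (hz : z ∈ Irr M) (hD : FinLcm s D) (h : LDvd z D) : ∃ r ∈ s, LDvd z r := by
  induction s using Finset.induction_on generalizing D with
  | empty => exact absurd (hM.eq_one_of_ldvd_one (h.trans (hD.2 1 (by simp)))) hz.1
  | insert a s _ ih =>
    obtain ⟨D₀, hD₀, hD₀D⟩ :=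
      hM.exists_finLcm s fun r hr => hD.1 r (Finset.mem_insert_of_mem hr)
    rcases hM.ldvd_or_ldvd_of_ldvd_lcm hz (hD.isRightLcm_insert hD₀ hD₀D) h with hza | hzD₀
    · exact ⟨a, Finset.mem_insert_self a s, hza⟩
    · obtain ⟨r, hr, hzr⟩ := ih hD₀ hzD₀
      exact ⟨r, Finset.mem_insert_of_mem hr, hzr⟩

theorem exists_isRes_finLcm [DecidableEq M] {s : Finset M} {c B D : M} (hD : FinLcm s D)
    (hs : ∀ r ∈ s, IsRes c r (res c r)) (hB : ∀ r ∈ s, LDvd (res c r) B) :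
    ∃ E, IsRes c D E ∧ FinLcm (s.image (res c)) E := by
  induction s using Finset.induction_on generalizing D with
  | empty =>
    obtain rfl : D = 1 := hM.eq_one_of_ldvd_one (hD.2 1 (by simp))
    rw [Finset.image_empty]
    exact ⟨1, isRes_one_right c, finLcm_empty⟩
  | insert a s _ ih =>
    obtain ⟨D₀, hD₀, hD₀D⟩ :=
      hM.exists_finLcm s fun r hr => hD.1 r (Finset.mem_insert_of_mem hr)
    obtain ⟨E₀, hE₀, hE₀s⟩ := ih hD₀ (fun r hr => hs r (Finset.mem_insert_of_mem hr))
      (fun r hr => hB r (Finset.mem_insert_of_mem hr))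
    have hE₀B : LDvd E₀ B := hE₀s.2 B fun t ht => by
      obtain ⟨r, hr, rfl⟩ := Finset.mem_image.mp ht
      exact hB r (Finset.mem_insert_of_mem hr)
    obtain ⟨E, hE, -⟩ := hM.exists_isRightLcm (hB a (Finset.mem_insert_self a s)) hE₀B
    refine ⟨E, hM.isRes_lcm (hs a (Finset.mem_insert_self a s)) hE₀
      (hD.isRightLcm_insert hD₀ hD₀D) hE, ?_⟩
    rw [Finset.image_insert]
    exact finLcm_insert hE₀s hE

theorem image_res_eq [DecidableEq M] {F S T : Finset M} {c : M} (hF : IsResidueClosed F)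
    (hSF : S ⊆ F) (hS : ∀ r ∈ S, ¬ LDvd r c) (hST : ∀ r ∈ S, res c r ∈ T)
    (hcard : T.card ≤ S.card) : S.image (res c) = T := by
  have hres : ∀ r ∈ S, IsRes c r (res c r) := fun r hr => hF.isRes_res (hSF hr) c
  have hinj : Set.InjOn (res c) S := fun r hr r' hr' hrr' =>
    hM.eq_of_isRes_eq (hF.irr r (hSF hr)) (hF.irr r' (hSF hr')) (hres r hr)
      (hrr' ▸ hres r' hr') fun h₁ => hS r hr (ldvd_of_isRes_one (h₁ ▸ hres r hr))
  refine Finset.eq_of_subset_of_card_le (fun t ht => ?_) ?_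
  · obtain ⟨r, hr, rfl⟩ := Finset.mem_image.mp ht
    exact hST r hr
  · rwa [Finset.card_image_of_injOn hinj]

/-- Residuation by `c` permutes `F`, so it fixes the lcm. -/
theorem isRes_finLcm_self {F : Finset M} {c D : M} (hF : IsResidueClosed F) (hD : FinLcm F D)
    (hc : ∀ s ∈ F, ¬ LDvd s c) : IsRes c D D := by
  classical
  obtain ⟨E, hE, hEF⟩ := hM.exists_isRes_finLcm hD (fun r hr => hF.isRes_res hr c)
    fun r hr => hF.ldvd_of_isRes hD hr (hF.isRes_res hr c)
  rw [hM.image_res_eq hF subset_rfl hc (fun r hr => hF.res_mem hr (hc r hr)) le_rfl] at hEF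
  rwa [hM.finLcm_unique hEF hD] at hE

theorem isRes_finLcm_self_of_notMem {F : Finset M} {a D : M} (hF : IsResidueClosed F)
    (hD : FinLcm F D) (ha : a ∈ Irr M) (haF : a ∉ F) : IsRes a D D :=
  hM.isRes_finLcm_self hF hD fun s hs hsa => by
    rcases eq_one_or_eq_of_ldvd_irr ha hsa with rfl | rfl
    · exact (hF.irr 1 hs).1 rfl
    · exact haF hs

theorem not_ldvd_finLcm_of_notMem {F : Finset M} {a D : M} (hF : ∀ s ∈ F, s ∈ Irr M)
    (hD : FinLcm F D) (ha : a ∈ Irr M) (haF : a ∉ F) : ¬ LDvd a D := fun h => by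
  classical
  obtain ⟨r, hr, har⟩ := hM.exists_mem_ldvd_of_ldvd_finLcm ha hD h
  rcases eq_one_or_eq_of_ldvd_irr (hF r hr) har with rfl | rfl
  · exact ha.1 rfl
  · exact haF hr

/-- Residuation by `γ` maps `F \ {γ}` onto `F \ {a'}`, so `D = a' ∨ γ \ D`; then
`γ \ (a ∨ D) = a' ∨ γ \ D = D` forces `γ = a`. -/
theorem notMem_of_isRes_of_mem {F : Finset M} {D a γ a' : M} (hF : IsResidueClosed F)
    (hD : FinLcm F D) (ha : a ∈ Irr M) (haF : a ∉ F) (hγF : γ ∈ F) (h : IsRes γ a a') :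
    a' ∉ F := by
  classical
  intro ha'F
  obtain ⟨E, hE, hEF⟩ := hM.exists_isRes_finLcm hD (fun r hr => hF.isRes_res hr γ)
    fun r hr => hF.ldvd_of_isRes hD hr (hF.isRes_res hr γ)
  have hγE : γ * E = D := hM.isRightLcm_unique hE (isRightLcm_of_ldvd (hD.1 γ hγF))
  have ha'E : ¬ LDvd a' E := fun ha'E => hM.not_ldvd_finLcm_of_notMem hF.irr hD ha haF
    (h.2.1.trans (hγE ▸ mul_ldvd_mul_left γ ha'E))
  have hker : ∀ r ∈ F.erase γ, ¬ LDvd r γ := fun r hr hrγ =>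
    (eq_one_or_eq_of_ldvd_irr (hF.irr γ hγF) hrγ).elim (hF.irr r (Finset.mem_of_mem_erase hr)).1
      (Finset.ne_of_mem_erase hr)
  have himage : (F.erase γ).image (res γ) = F.erase a' := by
    refine hM.image_res_eq hF (Finset.erase_subset γ F) hker (fun r hr => ?_) ?_
    · have hrF := Finset.mem_of_mem_erase hr
      refine Finset.mem_erase.2 ⟨fun hra' => ha'E ?_, hF.res_mem hrF (hker r hr)⟩
      exact hra' ▸ hEF.1 _ (Finset.mem_image_of_mem _ hrF)
    · rw [Finset.card_erase_of_mem ha'F, Finset.card_erase_of_mem hγF]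
  have hED : LDvd E D := hEF.2 D fun t ht => by
    obtain ⟨r, hr, rfl⟩ := Finset.mem_image.mp ht
    exact hF.ldvd_of_isRes hD hr (hF.isRes_res hr γ)
  have hDlcm : IsRightLcm a' E D := by
    refine ⟨hD.1 a' ha'F, hED, fun m ha'm hEm => hD.2 m fun s hs => ?_⟩
    by_cases hsa' : s = a'
    · exact hsa' ▸ ha'm
    · have hs' : s ∈ (F.erase γ).image (res γ) := himage ▸ Finset.mem_erase.2 ⟨hsa', hs⟩
      obtain ⟨r, hr, rfl⟩ := Finset.mem_image.mp hs'
      exact (hEF.1 _ (Finset.mem_image_of_mem _ (Finset.mem_of_mem_erase hr))).trans hEm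
  have haD := hM.isRes_finLcm_self_of_notMem hF hD ha haF
  have hγD : γ * D = a * D := hM.isRightLcm_unique (hM.isRes_lcm h hE haD hDlcm)
    (isRightLcm_of_ldvd ((hD.1 γ hγF).trans haD.2.1))
  exact haF (hM.mul_right_cancel D γ a hγD ▸ hγF)

/-- Both `a` and `γ` fix `D`, and `a ∨ γ D = γ D`; computing `a \ (γ ∨ D)` as
`(a \ γ) ∨ D` makes `γ = a` or `γ = a (a \ γ)`. -/
theorem notMem_of_isRes_of_notMem {F : Finset M} {D a γ a' : M} (hF : IsResidueClosed F)
    (hD : FinLcm F D) (ha : a ∈ Irr M) (haF : a ∉ F) (hγ : γ ∈ Irr M) (hγF : γ ∉ F)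
    (h : IsRes γ a a') : a' ∉ F := by
  intro ha'F
  have haD := hM.isRes_finLcm_self_of_notMem hF hD ha haF
  have hγD := hM.isRes_finLcm_self_of_notMem hF hD hγ hγF
  obtain ⟨w, hw⟩ : LDvd a (γ * a') := h.2.1
  have haγ : IsRes a γ w := by
    have := IsRightLcm.symm h
    rwa [hw] at this
  have hlcm : IsRightLcm a (γ * D) (γ * D) :=
    isRightLcm_of_ldvd (h.2.1.trans (mul_ldvd_mul_left γ (hD.1 a' ha'F)))
  by_cases hwD : LDvd w D
  · have haγD : a * D = γ * D :=
      hM.isRightLcm_unique (hM.isRes_lcm haγ haD hγD (isRightLcm_of_ldvd hwD)) hlcm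
    obtain rfl := hM.mul_right_cancel D a γ haγD
    exact (hF.irr a' ha'F).1 (hM.isRes_unique h (isRes_self _))
  · have hw₁ : w ≠ 1 := fun hw₁ => hwD (hw₁ ▸ one_ldvd D)
    have hwirr := (hM.eq_one_or_mem_irr_of_isRes hγ haγ).resolve_left hw₁
    have hwD' := hM.isRes_finLcm_self_of_notMem hF hD hwirr fun hwF => hwD (hD.1 w hwF)
    have hawD : a * (w * D) = γ * D :=
      hM.isRightLcm_unique (hM.isRes_lcm haγ haD hγD hwD') hlcm
    rw [← mul_assoc] at hawD
    rcases hγ.2 a w (hM.mul_right_cancel D _ _ hawD).symm with h₁ | h₁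
    · exact ha.1 h₁
    · exact hw₁ h₁

theorem notMem_of_isRes {F : Finset M} {D a γ a' : M} (hF : IsResidueClosed F)
    (hD : FinLcm F D) (ha : a ∈ Irr M) (haF : a ∉ F) (hγ : γ ∈ Irr M) (h : IsRes γ a a') :
    a' ∉ F := by
  by_cases hγF : γ ∈ F
  · exact hM.notMem_of_isRes_of_mem hF hD ha haF hγF h
  · exact hM.notMem_of_isRes_of_notMem hF hD ha haF hγ hγF h

theorem eq_one_or_notMem_of_isRes {F : Finset M} {D : M} (hF : IsResidueClosed F)
    (hD : FinLcm F D) (d : M) : ∀ {a w : M}, a ∈ Irr M → HasResidues a → a ∉ F →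
      IsRes d a w → w = 1 ∨ (w ∈ Irr M ∧ HasResidues w ∧ w ∉ F) := by
  induction hM.irr_gen d using Submonoid.closure_induction with
  | mem γ hγ =>
    intro a w ha hares haF h
    refine (hM.eq_one_or_mem_irr_of_isRes ha h).imp_right fun hw => ?_
    exact ⟨hw, hM.hasResidues_of_isRes hares h, hM.notMem_of_isRes hF hD ha haF hγ h⟩
  | one =>
    intro a w ha hares haF h
    obtain rfl := hM.isRes_unique h (isRes_one_left a)
    exact Or.inr ⟨ha, hares, haF⟩
  | mul d₁ d₂ _ _ ih₁ ih₂ =>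
    intro a w ha hares haF h
    have hr := isRes_res (hares d₁)
    have hw := hM.isRes_of_isRes_mul hr h
    rcases ih₁ ha hares haF hr with hr₁ | ⟨hrirr, hrres, hrF⟩
    · exact Or.inl (hM.isRes_unique (hr₁ ▸ hw) (isRes_one_right d₂))
    · exact ih₂ hrirr hrres hrF hw

theorem exists_finset_irr_isResidue (z : M) :
    ∃ F : Finset M, ∀ r, r ∈ F ↔ r ∈ Irr M ∧ IsResidue z r := by
  classical
  exact ⟨hM.irr_finite.toFinset.filter (IsResidue z), fun r => by simp⟩

theorem isResidueClosed_of_forall_mem_iff {z : M} {F : Finset M} (hz : HasResidues z)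
    (hF : ∀ r, r ∈ F ↔ r ∈ Irr M ∧ IsResidue z r) : IsResidueClosed F where
  irr s hs := ((hF s).1 hs).1
  hasResidues s hs := by
    obtain ⟨c, hc⟩ := ((hF s).1 hs).2
    exact hM.hasResidues_of_isRes hz hc
  closed s hs c r h := by
    obtain ⟨hs, hzs⟩ := (hF s).1 hs
    exact (hM.eq_one_or_mem_irr_of_isRes hs h).imp_right fun hr =>
      (hF r).2 ⟨hr, hM.isResidue_trans hzs ⟨c, h⟩⟩

/-- Take for `F` the irreducible residues of `z`: it contains `z`, and if it missed `x`, the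
residuation `b \ x = z` would lead into `F` from outside. -/
theorem isResidue_symm {x dx z : M} (hx : x ∈ Irr M) (hdx : IsLocalDelta x dx)
    (hxz : IsResidue x z) (hz : z ≠ 1) : IsResidue z x := by
  classical
  obtain ⟨b, hb⟩ := hxz
  obtain ⟨F, hFmem⟩ := hM.exists_finset_irr_isResidue z
  have hF := hM.isResidueClosed_of_forall_mem_iff (hM.hasResidues_of_isRes hdx.1 hb) hFmem
  obtain ⟨D, hD, -⟩ := hM.exists_finLcm F (A := dx) fun r hr => by
    obtain ⟨c, hc⟩ := ((hFmem r).1 hr).2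
    exact hdx.2.1 _ r (hM.isRes_mul hb hc)
  have hzF : z ∈ F :=
    (hFmem z).2 ⟨(hM.eq_one_or_mem_irr_of_isRes hx hb).resolve_left hz, .refl z⟩
  by_contra hzx
  rcases hM.eq_one_or_notMem_of_isRes hF hD b hx hdx.1 (fun hxF => hzx ((hFmem x).1 hxF).2)
    hb with h | h
  · exact hz h
  · exact h.2.2 hzF

theorem isResidue_of_ldvd_localDelta {x dx z : M} (hx : x ∈ Irr M) (hdx : IsLocalDelta x dx)
    (hz : z ∈ Irr M) (hzdx : LDvd z dx) : IsResidue x z := by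
  classical
  obtain ⟨F, hFmem⟩ := hM.exists_finset_irr_isResidue x
  have hD : FinLcm F dx := by
    refine ⟨fun r hr => ?_, fun m hm => hdx.2.2 m fun b r hbr => ?_⟩
    · obtain ⟨b, hb⟩ := ((hFmem r).1 hr).2
      exact hdx.2.1 b r hb
    · rcases hM.eq_one_or_mem_irr_of_isRes hx hbr with rfl | hr
      · exact one_ldvd m
      · exact hm r ((hFmem r).2 ⟨hr, b, hbr⟩)
  obtain ⟨r, hr, hzr⟩ := hM.exists_mem_ldvd_of_ldvd_finLcm hz hD hzdx
  obtain ⟨hrirr, hxr⟩ := (hFmem r).1 hr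
  rcases eq_one_or_eq_of_ldvd_irr hrirr hzr with h | rfl
  · exact absurd h hz.1
  · exact hxr

end IsDivisibilityMonoid

theorem stmt17 {M : Type*} [Monoid M] (hM : IsDivisibilityMonoid M)
    (x y dx dy : M) (hx : x ∈ Irr M) (hy : y ∈ Irr M)
    (hdx : IsLocalDelta x dx) (hdy : IsLocalDelta y dy) :
    dx = dy ∨ IsLeftGcd dx dy 1 := by
  by_cases hcommon : ∃ z ∈ Irr M, LDvd z dx ∧ LDvd z dy
  · obtain ⟨z, hz, hzdx, hzdy⟩ := hcommon
    have hxz := hM.isResidue_of_ldvd_localDelta hx hdx hz hzdx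
    have hyz := hM.isResidue_of_ldvd_localDelta hy hdy hz hzdy
    have hzx := hM.isResidue_symm hx hdx hxz hz.1
    have hzy := hM.isResidue_symm hy hdy hyz hz.1
    left
    exact hM.ldvd_antisymm
      (hdx.ldvd hdy fun r hr => hM.isResidue_trans hyz (hM.isResidue_trans hzx hr))
      (hdy.ldvd hdx fun r hr => hM.isResidue_trans hxz (hM.isResidue_trans hzy hr))
  · exact Or.inr <| hM.isLeftGcd_one_of_forall_irr fun z hz hzdx hzdy =>
      hcommon ⟨z, hz, hzdx, hzdy⟩
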